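/- For every integer n ≥ 3 and every natural number k, there exists a real polynomial p with p(0) = 1 and degree at most 2k such that ‖p(B_n)‖₂ ≤ 2·(1/2)^k, where B_n = |H_n|^{−1/2} A_n |H_n|^{−1/2}. Consequently, the residual r_{2k} produced by 2k steps of MINRES applied to the preconditioned system with preconditioner |H_n| satisfies ‖r_{2k}‖_{|H_n|⁻¹} ≤ 2·(1/2)^k ‖r_0‖_{|H_n|⁻¹}, since this residual norm equals the minimum over all such polynomials p of ‖|H_n|^{−1/2} p(A_n|H_n|⁻¹) r_0‖₂; in particular the convergence rate is independent of the mesh sizes. -/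

import Mathlib

open Matrix Filter MeasureTheory
open scoped Matrix.Norms.L2Operator

noncomputable section

/- `Tmat m n L` : the block lower-triangular banded block-Toeplitz matrix
`T_n ∈ ℝ^{mn×mn}`, with `n×n` blocks each of size `m×m`, whose `(i,j)`-th block equals
`L` if `i = j`, `-2·I_m` if `i = j+1`, `L` if `i = j+2`, and `0` otherwise. -/
def Tmat (m n : ℕ) (L : Matrix (Fin m) (Fin m) ℝ) :
    Matrix (Fin n × Fin m) (Fin n × Fin m) ℝ := fun p q =>
  if (p.1 : ℕ) = (q.1 : ℕ) then L p.2 q.2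
  else if (p.1 : ℕ) = (q.1 : ℕ) + 1 then (if p.2 = q.2 then (-2 : ℝ) else 0)
  else if (p.1 : ℕ) = (q.1 : ℕ) + 2 then L p.2 q.2
  else 0

/- `Ǐ_n ⊗ I_m` with `Ǐ_n = diag(1,…,1,1/2)`. -/
def checkI (m n : ℕ) : Matrix (Fin n × Fin m) (Fin n × Fin m) ℝ :=
  Matrix.diagonal fun p => if (p.1 : ℕ) = n - 1 then (1 / 2 : ℝ) else 1

/- `Î_n ⊗ I_m` with `Î_n = diag(1/2,1,…,1)`. -/
def hatI (m n : ℕ) : Matrix (Fin n × Fin m) (Fin n × Fin m) ℝ :=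
  Matrix.diagonal fun p => if (p.1 : ℕ) = 0 then (1 / 2 : ℝ) else 1

/- `A_n = [[α(Ǐ_n⊗I_m), T_nᵀ],[T_n, −α(Î_n⊗I_m)]] ∈ ℝ^{2mn×2mn}`. -/
def Amat (m n : ℕ) (α : ℝ) (L : Matrix (Fin m) (Fin m) ℝ) :
    Matrix ((Fin n × Fin m) ⊕ (Fin n × Fin m)) ((Fin n × Fin m) ⊕ (Fin n × Fin m)) ℝ :=
  Matrix.fromBlocks (α • checkI m n) (Tmat m n L)ᵀ (Tmat m n L) (-(α • hatI m n))

/- `H_n = [[α·I_{mn}, T_nᵀ],[T_n, −α·I_{mn}]] ∈ ℝ^{2mn×2mn}`. -/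
def Hmat (m n : ℕ) (α : ℝ) (L : Matrix (Fin m) (Fin m) ℝ) :
    Matrix ((Fin n × Fin m) ⊕ (Fin n × Fin m)) ((Fin n × Fin m) ⊕ (Fin n × Fin m)) ℝ :=
  Matrix.fromBlocks (α • 1) (Tmat m n L)ᵀ (Tmat m n L) (-(α • 1))

/- the unique symmetric positive semidefinite square root of a positive semidefinite
real matrix (junk value `0` if the matrix is not positive semidefinite). -/
open scoped Classical in
def matSqrt {k : Type*} [Fintype k] [DecidableEq k] (M : Matrix k k ℝ) : Matrix k k ℝ :=
  if h : M.PosSemidef then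
    (h.1.eigenvectorUnitary : Matrix k k ℝ) *
      diagonal ((RCLike.ofReal : ℝ → ℝ) ∘ Real.sqrt ∘ h.1.eigenvalues) *
      (star h.1.eigenvectorUnitary : Matrix k k ℝ)
  else 0

/- `|H_n| = (H_n²)^{1/2}`, the unique symmetric positive definite square root of `H_n²`. -/
def absH (m n : ℕ) (α : ℝ) (L : Matrix (Fin m) (Fin m) ℝ) :
    Matrix ((Fin n × Fin m) ⊕ (Fin n × Fin m)) ((Fin n × Fin m) ⊕ (Fin n × Fin m)) ℝ :=
  matSqrt (Hmat m n α L * Hmat m n α L)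

/- `|H_n|^{−1/2}`, the inverse of the symmetric positive definite square root of `|H_n|`. -/
def invSqrtAbsH (m n : ℕ) (α : ℝ) (L : Matrix (Fin m) (Fin m) ℝ) :
    Matrix ((Fin n × Fin m) ⊕ (Fin n × Fin m)) ((Fin n × Fin m) ⊕ (Fin n × Fin m)) ℝ :=
  (matSqrt (absH m n α L))⁻¹

/- `B_n = |H_n|^{−1/2} A_n |H_n|^{−1/2}`. -/
def Bmat (m n : ℕ) (α : ℝ) (L : Matrix (Fin m) (Fin m) ℝ) :
    Matrix ((Fin n × Fin m) ⊕ (Fin n × Fin m)) ((Fin n × Fin m) ⊕ (Fin n × Fin m)) ℝ :=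
  invSqrtAbsH m n α L * Amat m n α L * invSqrtAbsH m n α L

/- Euclidean norm of a vector. -/
def vecNorm {k : Type*} [Fintype k] (v : k → ℝ) : ℝ := Real.sqrt (∑ i, v i ^ 2)

/-! ### Auxiliary lemmas -/

open scoped MatrixOrder in
lemma Matrix.PosSemidef.eq_matSqrt_of_sq_eq {k : Type*} [Fintype k] [DecidableEq k] {N M : Matrix k k ℝ}
    (hN : N.PosSemidef) (hM : M.PosSemidef) (h : N ^ 2 = M) : N = matSqrt M := by
  have e : matSqrt M = cfc Real.sqrt M := by
    rw [matSqrt, dif_pos hM, hM.1.cfc_eq, Matrix.IsHermitian.cfc, Unitary.conjStarAlgAut_apply]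
  have e2 : CFC.sqrt M = cfc Real.sqrt M := by
    rw [CFC.sqrt_eq_cfc, cfc_nnreal_eq_real _ M hM.nonneg]
    refine cfc_congr fun x hx => ?_
    rcases le_total x 0 with hx0 | hx0 <;>
      simp [Real.coe_sqrt, Real.coe_toNNReal', hx0, Real.sqrt_eq_zero_of_nonpos]
  rw [e, ← e2, eq_comm,
    CFC.sqrt_eq_iff M N hM.nonneg hN.nonneg, ← sq, h]

set_option linter.unusedSectionVars false
set_option maxHeartbeats 1600000

section Aux
open Polynomial
variable {ι : Type*} [Fintype ι] [DecidableEq ι]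

lemma real_conjT {a b : Type*} (M : Matrix a b ℝ) : Mᴴ = Mᵀ := by
  ext i j; simp [Matrix.conjTranspose_apply]

lemma vecNorm_nonneg (v : ι → ℝ) : 0 ≤ vecNorm v := Real.sqrt_nonneg _

lemma vecNorm_eq_norm (v : ι → ℝ) : vecNorm v = ‖(WithLp.equiv 2 (ι → ℝ)).symm v‖ := by
  rw [EuclideanSpace.norm_eq, vecNorm]
  simp [PiLp.toLp_apply, Real.norm_eq_abs, sq_abs]

lemma vecNorm_sq (v : ι → ℝ) : vecNorm v ^ 2 = v ⬝ᵥ v := by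
  rw [vecNorm, Real.sq_sqrt (by positivity)]
  simp [dotProduct, sq]

lemma vecNorm_mulVec_le (M : Matrix ι ι ℝ) (v : ι → ℝ) :
    vecNorm (M *ᵥ v) ≤ ‖M‖ * vecNorm v := by
  have := M.l2_opNorm_mulVec ((WithLp.equiv 2 (ι → ℝ)).symm v)
  simpa [vecNorm_eq_norm] using this

lemma opNorm_le_of_forall (M : Matrix ι ι ℝ) (c : ℝ) (hc : 0 ≤ c)
    (h : ∀ v, vecNorm (M *ᵥ v) ≤ c * vecNorm v) : ‖M‖ ≤ c := by
  rw [Matrix.l2_opNorm_def]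
  refine ContinuousLinearMap.opNorm_le_bound _ hc fun x => ?_
  have := h ((WithLp.equiv 2 (ι → ℝ)) x)
  simp only [vecNorm_eq_norm] at this
  simpa [Matrix.toEuclideanLin_apply] using this

lemma vecNorm_mulVec_unitary {V : Matrix ι ι ℝ} (hV : Vᴴ * V = 1) (x : ι → ℝ) :
    vecNorm (V *ᵥ x) = vecNorm x := by
  have h2 : (V *ᵥ x) ⬝ᵥ (V *ᵥ x) = x ⬝ᵥ x := by
    rw [Matrix.dotProduct_mulVec, ← Matrix.mulVec_transpose, Matrix.mulVec_mulVec]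
    have : Vᵀ = Vᴴ := by ext i j; simp [Matrix.conjTranspose_apply]
    rw [this, hV, Matrix.one_mulVec]
  rw [vecNorm, vecNorm]
  congr 1
  have e1 : ∑ i, (V *ᵥ x) i ^ 2 = (V *ᵥ x) ⬝ᵥ (V *ᵥ x) := by simp [dotProduct, sq]
  have e2 : ∑ i, x i ^ 2 = x ⬝ᵥ x := by simp [dotProduct, sq]
  rw [e1, e2, h2]

lemma vecNorm_sub_le (u v : ι → ℝ) : vecNorm (u - v) ≤ vecNorm u + vecNorm v := by
  simp only [vecNorm_eq_norm]
  have : (WithLp.equiv 2 (ι → ℝ)).symm (u - v)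
      = (WithLp.equiv 2 (ι → ℝ)).symm u - (WithLp.equiv 2 (ι → ℝ)).symm v := rfl
  rw [this]
  exact norm_sub_le _ _

lemma vecNorm_add_le (u v : ι → ℝ) : vecNorm (u + v) ≤ vecNorm u + vecNorm v := by
  simp only [vecNorm_eq_norm]
  have : (WithLp.equiv 2 (ι → ℝ)).symm (u + v)
      = (WithLp.equiv 2 (ι → ℝ)).symm u + (WithLp.equiv 2 (ι → ℝ)).symm v := rfl
  rw [this]
  exact norm_add_le _ _

lemma norm_diagonal_le (d : ι → ℝ) (c : ℝ) (hc : 0 ≤ c) (h : ∀ i, |d i| ≤ c) :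
    ‖Matrix.diagonal d‖ ≤ c := by
  refine opNorm_le_of_forall _ c hc fun v => ?_
  rw [vecNorm, vecNorm, ← Real.sqrt_sq hc, ← Real.sqrt_mul (by positivity)]
  refine Real.sqrt_le_sqrt ?_
  rw [Finset.mul_sum]
  refine Finset.sum_le_sum fun i _ => ?_
  rw [Matrix.mulVec_diagonal, mul_pow]
  have : d i ^ 2 ≤ c ^ 2 := by
    rw [← sq_abs (d i)]
    exact pow_le_pow_left₀ (abs_nonneg _) (h i) 2
  nlinarith [sq_nonneg (v i)]

lemma norm_conj_diag_le {V : Matrix ι ι ℝ} (hV1 : Vᴴ * V = 1) (hV2 : V * Vᴴ = 1)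
    (d : ι → ℝ) (c : ℝ) (hc : 0 ≤ c) (h : ∀ i, |d i| ≤ c) :
    ‖V * Matrix.diagonal d * Vᴴ‖ ≤ c := by
  refine opNorm_le_of_forall _ c hc fun v => ?_
  rw [← Matrix.mulVec_mulVec, ← Matrix.mulVec_mulVec]
  have hVH : (Vᴴ)ᴴ * Vᴴ = 1 := by rw [Matrix.conjTranspose_conjTranspose]; exact hV2
  rw [vecNorm_mulVec_unitary hV1]
  calc vecNorm (Matrix.diagonal d *ᵥ (Vᴴ *ᵥ v))
      ≤ c * vecNorm (Vᴴ *ᵥ v) := by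
        have h1 := vecNorm_mulVec_le (Matrix.diagonal d) (Vᴴ *ᵥ v)
        have h2 := norm_diagonal_le d c hc h
        have h3 := vecNorm_nonneg (Vᴴ *ᵥ v)
        nlinarith
    _ = c * vecNorm v := by rw [vecNorm_mulVec_unitary hVH]

def conjDiagHom {V : Matrix ι ι ℝ} (hV1 : Vᴴ * V = 1) (hV2 : V * Vᴴ = 1) :
    (ι → ℝ) →ₐ[ℝ] Matrix ι ι ℝ where
  toFun d := V * Matrix.diagonal d * Vᴴ
  map_one' := by
    show V * Matrix.diagonal (1 : ι → ℝ) * Vᴴ = 1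
    have : Matrix.diagonal (1 : ι → ℝ) = (1 : Matrix ι ι ℝ) := by
      simp [← Matrix.diagonal_one]
    rw [this, mul_one, hV2]
  map_mul' d e := by
    show V * Matrix.diagonal (d * e) * Vᴴ = (V * Matrix.diagonal d * Vᴴ) * (V * Matrix.diagonal e * Vᴴ)
    have key : Matrix.diagonal (d * e) = Matrix.diagonal d * (Vᴴ * V) * Matrix.diagonal e := by
      rw [hV1, mul_one, Matrix.diagonal_mul_diagonal]; rfl
    rw [key, hV1, mul_one]
    simp only [Matrix.mul_assoc]
    rw [← Matrix.mul_assoc Vᴴ V, hV1, Matrix.one_mul]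
  map_zero' := by
    show V * Matrix.diagonal (0 : ι → ℝ) * Vᴴ = 0
    have : Matrix.diagonal (0 : ι → ℝ) = (0 : Matrix ι ι ℝ) := by
      ext i j; by_cases h : i = j <;> simp [Matrix.diagonal_apply, h]
    rw [this, Matrix.mul_zero, Matrix.zero_mul]
  map_add' d e := by
    show V * Matrix.diagonal (d + e) * Vᴴ = V * Matrix.diagonal d * Vᴴ + V * Matrix.diagonal e * Vᴴ
    have : Matrix.diagonal (d + e) = Matrix.diagonal d + Matrix.diagonal e := by
      ext i j; by_cases h : i = j <;> simp [Matrix.diagonal_apply, h]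
    rw [this, Matrix.mul_add, Matrix.add_mul]
  commutes' r := by
    show V * Matrix.diagonal ((algebraMap ℝ (ι → ℝ)) r) * Vᴴ = algebraMap ℝ (Matrix ι ι ℝ) r
    have h0 : Matrix.diagonal ((algebraMap ℝ (ι → ℝ)) r) = (r • 1 : Matrix ι ι ℝ) := by
      ext i j; by_cases h : i = j <;>
        simp [Matrix.diagonal_apply, h, Algebra.algebraMap_eq_smul_one, Matrix.one_apply]
    rw [h0, Algebra.algebraMap_eq_smul_one]
    rw [Matrix.mul_smul, smul_mul_assoc, mul_one, hV2]

lemma conjDiagHom_apply {V : Matrix ι ι ℝ} (hV1 : Vᴴ * V = 1) (hV2 : V * Vᴴ = 1) (d : ι → ℝ) :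
    conjDiagHom hV1 hV2 d = V * Matrix.diagonal d * Vᴴ := rfl

lemma eigenvalue_ge {M : Matrix ι ι ℝ} (hM : M.IsHermitian) {a : ℝ}
    (h : (M - a • 1).PosSemidef) (i : ι) : a ≤ hM.eigenvalues i := by
  set v : ι → ℝ := (WithLp.equiv 2 (ι → ℝ)) (hM.eigenvectorBasis i) with hv
  have hMv : M *ᵥ v = hM.eigenvalues i • v := hM.mulVec_eigenvectorBasis i
  have hvv : v ⬝ᵥ v = 1 := by
    have hnorm : ‖hM.eigenvectorBasis i‖ = 1 := hM.eigenvectorBasis.orthonormal.1 i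
    have h0 := EuclideanSpace.inner_eq_star_dotProduct (𝕜 := ℝ)
      (hM.eigenvectorBasis i) (hM.eigenvectorBasis i)
    rw [real_inner_self_eq_norm_sq, hnorm] at h0
    simpa [hv] using h0.symm
  have h2 := h.dotProduct_mulVec_nonneg v
  rw [Matrix.sub_mulVec, hMv, Matrix.smul_mulVec, Matrix.one_mulVec] at h2
  have hsv : star v = v := by simp
  rw [hsv, dotProduct_sub, dotProduct_smul, dotProduct_smul, hvv] at h2
  simp only [smul_eq_mul, mul_one] at h2
  simpa using h2

lemma eigenvalue_le {M : Matrix ι ι ℝ} (hM : M.IsHermitian) {b : ℝ}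
    (h : (b • 1 - M).PosSemidef) (i : ι) : hM.eigenvalues i ≤ b := by
  set v : ι → ℝ := (WithLp.equiv 2 (ι → ℝ)) (hM.eigenvectorBasis i) with hv
  have hMv : M *ᵥ v = hM.eigenvalues i • v := hM.mulVec_eigenvectorBasis i
  have hvv : v ⬝ᵥ v = 1 := by
    have hnorm : ‖hM.eigenvectorBasis i‖ = 1 := hM.eigenvectorBasis.orthonormal.1 i
    have h0 := EuclideanSpace.inner_eq_star_dotProduct (𝕜 := ℝ)
      (hM.eigenvectorBasis i) (hM.eigenvectorBasis i)
    rw [real_inner_self_eq_norm_sq, hnorm] at h0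
    simpa [hv] using h0.symm
  have h2 := h.dotProduct_mulVec_nonneg v
  rw [Matrix.sub_mulVec, hMv, Matrix.smul_mulVec, Matrix.one_mulVec] at h2
  have hsv : star v = v := by simp
  rw [hsv, dotProduct_sub, dotProduct_smul, dotProduct_smul, hvv] at h2
  simp only [smul_eq_mul, mul_one] at h2
  simpa using h2

lemma aeval_pi_apply (w : ι → ℝ) (q : ℝ[X]) (i : ι) :
    (Polynomial.aeval w q) i = q.eval (w i) := by
  have := Polynomial.aeval_algHom_apply (Pi.evalAlgHom ℝ (fun _ : ι => ℝ) i) w q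
  simp only [Pi.evalAlgHom_apply] at this
  rw [← this, Polynomial.aeval_def, Polynomial.eval₂_eq_eval_map, Algebra.algebraMap_self,
    Polynomial.map_id]

lemma spectral_psi {M : Matrix ι ι ℝ} (hM : M.IsHermitian) :
    M = conjDiagHom
      (by rw [← Matrix.star_eq_conjTranspose]; exact Unitary.coe_star_mul_self hM.eigenvectorUnitary)
      (by rw [← Matrix.star_eq_conjTranspose]; exact Unitary.coe_mul_star_self hM.eigenvectorUnitary)
      hM.eigenvalues := by
  rw [conjDiagHom_apply]
  have := hM.spectral_theorem
  rw [RCLike.ofReal_real_eq_id, Function.id_comp] at this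
  rw [← Matrix.star_eq_conjTranspose]
  exact this

lemma norm_aeval_le {M : Matrix ι ι ℝ} (hM : M.IsHermitian) {a b c : ℝ} (hc : 0 ≤ c)
    (ha : (M - a • 1).PosSemidef) (hb : (b • 1 - M).PosSemidef)
    (q : ℝ[X]) (h : ∀ x, a ≤ x → x ≤ b → |q.eval x| ≤ c) :
    ‖Polynomial.aeval M q‖ ≤ c := by
  have hV1 : ((hM.eigenvectorUnitary : Matrix ι ι ℝ))ᴴ * (hM.eigenvectorUnitary : Matrix ι ι ℝ) = 1 := by
    rw [← Matrix.star_eq_conjTranspose]; exact Unitary.coe_star_mul_self hM.eigenvectorUnitary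
  have hV2 : (hM.eigenvectorUnitary : Matrix ι ι ℝ) * ((hM.eigenvectorUnitary : Matrix ι ι ℝ))ᴴ = 1 := by
    rw [← Matrix.star_eq_conjTranspose]; exact Unitary.coe_mul_star_self hM.eigenvectorUnitary
  have hspec : M = conjDiagHom hV1 hV2 hM.eigenvalues := spectral_psi hM
  rw [hspec, Polynomial.aeval_algHom_apply, conjDiagHom_apply]
  refine norm_conj_diag_le hV1 hV2 _ c hc fun i => ?_
  rw [_root_.aeval_pi_apply]
  exact h _ (eigenvalue_ge hM ha i) (eigenvalue_le hM hb i)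

lemma conjDiagHom_isHermitian {V : Matrix ι ι ℝ} (hV1 : Vᴴ * V = 1) (hV2 : V * Vᴴ = 1)
    (d : ι → ℝ) : (conjDiagHom hV1 hV2 d).IsHermitian := by
  rw [conjDiagHom_apply]
  unfold Matrix.IsHermitian
  rw [Matrix.conjTranspose_mul, Matrix.conjTranspose_mul, Matrix.conjTranspose_conjTranspose]
  have hd : (Matrix.diagonal d)ᴴ = Matrix.diagonal d := by
    rw [real_conjT, Matrix.diagonal_transpose]
  rw [hd, Matrix.mul_assoc]

lemma conjDiagHom_posSemidef {V : Matrix ι ι ℝ} (hV1 : Vᴴ * V = 1) (hV2 : V * Vᴴ = 1)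
    {w : ι → ℝ} (h : ∀ i, 0 ≤ w i) : (conjDiagHom hV1 hV2 w).PosSemidef := by
  rw [conjDiagHom_apply]
  exact (Matrix.posSemidef_diagonal_iff.mpr h).mul_mul_conjTranspose_same V

lemma posSemidef_conjDiagHom_imp {V : Matrix ι ι ℝ} (hV1 : Vᴴ * V = 1) (hV2 : V * Vᴴ = 1)
    {w : ι → ℝ} (h : (conjDiagHom hV1 hV2 w).PosSemidef) (i : ι) : 0 ≤ w i := by
  have h2 := h.dotProduct_mulVec_nonneg (V *ᵥ Pi.single i 1)
  have hsv : star (V *ᵥ Pi.single i 1) = V *ᵥ Pi.single i 1 := by simp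
  rw [hsv, conjDiagHom_apply] at h2
  have key : (V * Matrix.diagonal w * Vᴴ) *ᵥ (V *ᵥ Pi.single i 1)
      = w i • (V *ᵥ Pi.single i 1) := by
    have e1 : (V * Matrix.diagonal w * Vᴴ) *ᵥ (V *ᵥ Pi.single i 1)
        = (V * Matrix.diagonal w) *ᵥ Pi.single i 1 := by
      rw [Matrix.mulVec_mulVec, Matrix.mul_assoc (V * Matrix.diagonal w) _ _, hV1,
        Matrix.mul_one]
    rw [e1, ← Matrix.mulVec_mulVec, Matrix.diagonal_mulVec_single, mul_one]
    have : (Pi.single i (w i) : ι → ℝ) = w i • (Pi.single i 1 : ι → ℝ) := by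
      funext j; by_cases hj : j = i <;> simp [Pi.single_apply, hj]
    rw [this, Matrix.mulVec_smul]
  rw [key, dotProduct_smul] at h2
  have hxx : (V *ᵥ Pi.single i 1) ⬝ᵥ (V *ᵥ Pi.single i 1) = 1 := by
    have hvn := vecNorm_mulVec_unitary hV1 (Pi.single i 1)
    have h1 : vecNorm (Pi.single i 1 : ι → ℝ) = 1 := by
      rw [vecNorm]
      have : ∑ j, (Pi.single i 1 : ι → ℝ) j ^ 2 = 1 := by
        rw [Finset.sum_eq_single i] <;> simp +contextual [Pi.single_apply]
      rw [this, Real.sqrt_one]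
    have h2' := vecNorm_sq (V *ᵥ Pi.single i 1)
    rw [hvn, h1] at h2'
    simpa using h2'.symm
  rw [hxx] at h2
  simpa using h2

lemma mul_pow_comm {S X Y : Matrix ι ι ℝ} (h : S * X = Y * S) :
    ∀ j : ℕ, S * X ^ j = Y ^ j * S
  | 0 => by simp
  | (j+1) => by
    rw [pow_succ, ← Matrix.mul_assoc, mul_pow_comm h j, Matrix.mul_assoc, h,
      ← Matrix.mul_assoc, ← pow_succ]

lemma mul_aeval_comm {S X Y : Matrix ι ι ℝ} (h : S * X = Y * S) (p : ℝ[X]) :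
    S * Polynomial.aeval X p = Polynomial.aeval Y p * S := by
  induction p using Polynomial.induction_on' with
  | add p q hp hq => rw [map_add, map_add, Matrix.mul_add, Matrix.add_mul, hp, hq]
  | monomial j a =>
    rw [Polynomial.aeval_monomial, Polynomial.aeval_monomial]
    rw [Algebra.algebraMap_eq_smul_one, smul_mul_assoc, smul_mul_assoc, one_mul, one_mul,
      Matrix.mul_smul, mul_pow_comm h j, smul_mul_assoc]

open Polynomial.Chebyshev in
lemma cheb_natDegree_le : ∀ k : ℕ, (T ℝ (k : ℤ)).natDegree ≤ k
  | 0 => by simp [T_zero]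
  | 1 => by simp [T_one]
  | (j+2) => by
    have h1 := cheb_natDegree_le j
    have h2 := cheb_natDegree_le (j+1)
    rw [show (((j+2:ℕ)):ℤ) = ((j:ℤ)+1)+1 by push_cast; ring,
      show ((j:ℤ)+1)+1 = ((j:ℤ))+2 by ring, T_add_two]
    refine le_trans (Polynomial.natDegree_sub_le _ _) (max_le ?_ ?_)
    · refine le_trans (Polynomial.natDegree_mul_le) ?_
      have hx : (2 * X : ℝ[X]).natDegree ≤ 1 :=
        le_trans Polynomial.natDegree_mul_le (by simp)
      have : ((j:ℤ)+1) = (((j+1:ℕ)):ℤ) := by push_cast; ring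
      rw [this]
      omega
    · omega

open Polynomial.Chebyshev in
lemma cheb_eval_54 : ∀ k : ℕ, (T ℝ (k:ℤ)).eval (5/4 : ℝ) = ((2:ℝ)^k + (1/2:ℝ)^k)/2
  | 0 => by norm_num [T_zero]
  | 1 => by norm_num [T_one]
  | (j+2) => by
    have h1 := cheb_eval_54 j
    have h2 := cheb_eval_54 (j+1)
    rw [show (((j+2:ℕ)):ℤ) = ((j:ℤ))+2 by push_cast; ring, T_add_two]
    simp only [Polynomial.eval_sub, Polynomial.eval_mul, Polynomial.eval_X,
      Polynomial.eval_ofNat]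
    rw [show ((j:ℤ)+1) = (((j+1:ℕ)):ℤ) by push_cast; ring, h1, h2]
    ring

open Polynomial.Chebyshev in
lemma cheb_abs_le (k : ℕ) {x : ℝ} (h1 : -1 ≤ x) (h2 : x ≤ 1) :
    |(T ℝ (k:ℤ)).eval x| ≤ 1 := by
  rw [← Real.cos_arccos h1 h2, Polynomial.Chebyshev.T_real_cos]
  exact Real.abs_cos_le_one _

open Polynomial.Chebyshev in
lemma cheb_eval_54_pos (k : ℕ) : (0:ℝ) < (T ℝ (k:ℤ)).eval (5/4 : ℝ) := by
  rw [cheb_eval_54]; positivity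

open Polynomial.Chebyshev in
lemma cheb_eval_54_ge (k : ℕ) : (2:ℝ)^k / 2 ≤ (T ℝ (k:ℤ)).eval (5/4 : ℝ) := by
  rw [cheb_eval_54]
  have : (0:ℝ) ≤ (1/2:ℝ)^k := by positivity
  linarith

end Aux

lemma hHH_lemma (m n : ℕ) (α : ℝ) (L : Matrix (Fin m) (Fin m) ℝ) :
    Hmat m n α L * Hmat m n α L =
      (Matrix.fromBlocks (Tmat m n L) 0 0 (Tmat m n L)ᵀ)ᴴ *
        (Matrix.fromBlocks (Tmat m n L) 0 0 (Tmat m n L)ᵀ) + (α^2) • 1 := by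
  rw [Hmat, Matrix.fromBlocks_multiply, Matrix.fromBlocks_conjTranspose]
  simp only [real_conjT, Matrix.transpose_transpose, Matrix.transpose_zero]
  rw [Matrix.fromBlocks_multiply, ← Matrix.fromBlocks_one, Matrix.fromBlocks_smul,
    Matrix.fromBlocks_add]
  ext i j
  rcases i with i | i <;> rcases j with j | j <;>
    simp [Matrix.fromBlocks, Matrix.smul_mul, Matrix.mul_smul, smul_smul, Matrix.one_mul,
      Matrix.add_apply, Matrix.smul_apply, Matrix.neg_mul, Matrix.mul_neg,
      Matrix.one_apply] <;>
    split_ifs <;> ring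

lemma hD_lemma (m n : ℕ) (α : ℝ) (L : Matrix (Fin m) (Fin m) ℝ) :
    Amat m n α L - Hmat m n α L = Matrix.diagonal (Sum.elim
      (fun p : Fin n × Fin m => if (p.1 : ℕ) = n - 1 then -(α/2) else 0)
      (fun p : Fin n × Fin m => if (p.1 : ℕ) = 0 then α/2 else 0)) := by
  ext i j
  rcases i with i | i <;> rcases j with j | j <;>
    simp [Amat, Hmat, checkI, hatI, Matrix.fromBlocks, Matrix.sub_apply,
      Matrix.diagonal_apply, Matrix.one_apply, Sum.elim] <;>
    by_cases h : i = j <;> split_ifs <;> simp_all <;> ring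

/-! ### Main theorem -/

theorem stmt_7 (m n : ℕ) (hm : 1 ≤ m) (hn : 3 ≤ n) (α : ℝ) (hα : 0 < α)
    (L : Matrix (Fin m) (Fin m) ℝ) (hL : L.PosDef) (k : ℕ) :
    (∃ p : Polynomial ℝ, Polynomial.eval 0 p = 1 ∧ p.natDegree ≤ 2 * k ∧
      ‖Polynomial.aeval (Bmat m n α L) p‖ ≤ 2 * (1 / 2 : ℝ) ^ k) ∧
    ∀ r0 : (Fin n × Fin m) ⊕ (Fin n × Fin m) → ℝ,
      sInf {x : ℝ | ∃ p : Polynomial ℝ, Polynomial.eval 0 p = 1 ∧ p.natDegree ≤ 2 * k ∧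
          x = vecNorm ((invSqrtAbsH m n α L *
            Polynomial.aeval (Amat m n α L * (absH m n α L)⁻¹) p) *ᵥ r0)} ≤
        2 * (1 / 2 : ℝ) ^ k * vecNorm (invSqrtAbsH m n α L *ᵥ r0) := by
  classical
  set T := Tmat m n L with hTdef
  set H := Hmat m n α L with hHdef
  set A := Amat m n α L with hAdef
  have hHsym : H.IsHermitian := by
    unfold Matrix.IsHermitian
    rw [hHdef, Hmat, Matrix.fromBlocks_conjTranspose]
    simp only [real_conjT, Matrix.transpose_transpose, Matrix.transpose_smul,
      Matrix.transpose_one, Matrix.transpose_neg]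
  have hAsym : A.IsHermitian := by
    unfold Matrix.IsHermitian
    rw [hAdef, Amat, Matrix.fromBlocks_conjTranspose]
    simp only [real_conjT, Matrix.transpose_transpose, Matrix.transpose_smul,
      Matrix.transpose_neg, checkI, hatI, Matrix.diagonal_transpose]
  have hH2psd : (H * H).PosSemidef := by
    have h0 : H * H = Hᴴ * H := by rw [hHsym]
    rw [h0]; exact Matrix.posSemidef_conjTranspose_mul_self H
  have hHH : H * H = (Matrix.fromBlocks T 0 0 Tᵀ)ᴴ * (Matrix.fromBlocks T 0 0 Tᵀ)
      + (α^2) • 1 := hHH_lemma m n α L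
  have hH2ge : (H * H - (α^2) • 1).PosSemidef := by
    rw [hHH, add_sub_cancel_right]
    exact Matrix.posSemidef_conjTranspose_mul_self _
  -- spectral setup for H
  have hV1 : ((hHsym.eigenvectorUnitary : Matrix ((Fin n × Fin m) ⊕ (Fin n × Fin m)) ((Fin n × Fin m) ⊕ (Fin n × Fin m)) ℝ))ᴴ *
      (hHsym.eigenvectorUnitary : Matrix ((Fin n × Fin m) ⊕ (Fin n × Fin m)) ((Fin n × Fin m) ⊕ (Fin n × Fin m)) ℝ) = 1 := by
    rw [← Matrix.star_eq_conjTranspose]; exact Unitary.coe_star_mul_self hHsym.eigenvectorUnitary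
  have hV2 : (hHsym.eigenvectorUnitary : Matrix ((Fin n × Fin m) ⊕ (Fin n × Fin m)) ((Fin n × Fin m) ⊕ (Fin n × Fin m)) ℝ) *
      ((hHsym.eigenvectorUnitary : Matrix ((Fin n × Fin m) ⊕ (Fin n × Fin m)) ((Fin n × Fin m) ⊕ (Fin n × Fin m)) ℝ))ᴴ = 1 := by
    rw [← Matrix.star_eq_conjTranspose]; exact Unitary.coe_mul_star_self hHsym.eigenvectorUnitary
  set ψ := conjDiagHom hV1 hV2 with hψdef
  set μ := hHsym.eigenvalues with hμdef
  have hHspec : H = ψ μ := spectral_psi hHsym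
  have hmusq : ∀ i, α^2 ≤ μ i * μ i := by
    intro i
    have h1 : H * H - (α^2) • 1 = ψ (μ * μ - (algebraMap ℝ _ (α^2))) := by
      rw [_root_.map_sub, _root_.map_mul, ← hHspec, AlgHom.commutes, Algebra.algebraMap_eq_smul_one]
    have h2 : (ψ (μ * μ - algebraMap ℝ _ (α^2))).PosSemidef := h1 ▸ hH2ge
    have h3 := posSemidef_conjDiagHom_imp hV1 hV2 h2 i
    have he : (μ * μ - algebraMap ℝ _ (α^2)) i = μ i * μ i - α^2 := by
      simp [Algebra.algebraMap_eq_smul_one]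
    rw [he] at h3; linarith
  have habs : ∀ i, α ≤ |μ i| := by
    intro i
    nlinarith [hmusq i, abs_nonneg (μ i), abs_mul_abs_self (μ i), hα]
  set g : _ → ℝ := fun i => (Real.sqrt |μ i|)⁻¹ with hgdef
  have hPdef : absH m n α L = ψ (fun i => |μ i|) := by
    have hsq : (ψ fun i => |μ i|)^2 = H * H := by
      rw [pow_two, ← _root_.map_mul, hHspec, ← _root_.map_mul]
      congr 1; funext i
      simp [Pi.mul_apply, abs_mul_abs_self]
    have h0 := (conjDiagHom_posSemidef hV1 hV2
      (fun i => abs_nonneg (μ i))).eq_matSqrt_of_sq_eq hH2psd hsq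
    rw [absH, ← hHdef]
    exact h0.symm
  have hPpsd : (absH m n α L).PosSemidef := by
    rw [hPdef]; exact conjDiagHom_posSemidef hV1 hV2 (fun i => abs_nonneg _)
  have hQdef : matSqrt (absH m n α L) = ψ (fun i => Real.sqrt |μ i|) := by
    have hsq : (ψ fun i => Real.sqrt |μ i|)^2 = absH m n α L := by
      rw [pow_two, ← _root_.map_mul, hPdef]
      congr 1; funext i
      simp [Pi.mul_apply, Real.mul_self_sqrt (abs_nonneg (μ i))]
    have h0 := (conjDiagHom_posSemidef hV1 hV2
      (fun i => Real.sqrt_nonneg _)).eq_matSqrt_of_sq_eq hPpsd hsq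
    exact h0.symm
  have hsqrtmu_pos : ∀ i, 0 < Real.sqrt |μ i| :=
    fun i => Real.sqrt_pos.mpr (lt_of_lt_of_le hα (habs i))
  have hSdef : invSqrtAbsH m n α L = ψ g := by
    rw [invSqrtAbsH, hQdef]
    refine Matrix.inv_eq_right_inv ?_
    rw [← _root_.map_mul]
    have h0 : ((fun i => Real.sqrt |μ i|) * g) = 1 := by
      funext i
      simp [hgdef, Pi.mul_apply, mul_inv_cancel₀ (hsqrtmu_pos i).ne']
    rw [h0, _root_.map_one]
  set S := invSqrtAbsH m n α L with hSvar
  have hSpsi : S = ψ g := hSdef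
  have hmu_ne : ∀ i, |μ i| ≠ 0 := fun i => by have := habs i; intro h0; rw [h0] at this; linarith
  have hPinv : (absH m n α L)⁻¹ = ψ (fun i => |μ i|⁻¹) := by
    rw [hPdef]
    refine Matrix.inv_eq_right_inv ?_
    rw [← _root_.map_mul]
    have h0 : ((fun i => |μ i|) * fun i => |μ i|⁻¹) = 1 := by
      funext i
      simp [Pi.mul_apply, mul_inv_cancel₀ (hmu_ne i)]
    rw [h0, _root_.map_one]
  have hSS : S * S = (absH m n α L)⁻¹ := by
    rw [hSpsi, ← _root_.map_mul, hPinv]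
    congr 1; funext i
    simp only [Pi.mul_apply, hgdef]
    rw [← mul_inv, Real.mul_self_sqrt (abs_nonneg _)]
  have hSnorm : ‖S‖ ≤ (Real.sqrt α)⁻¹ := by
    rw [hSpsi, hψdef, conjDiagHom_apply]
    refine norm_conj_diag_le hV1 hV2 _ _ (by positivity) fun i => ?_
    rw [hgdef, abs_of_nonneg (by positivity)]
    exact inv_anti₀ (Real.sqrt_pos.mpr hα) (Real.sqrt_le_sqrt (habs i))
  -- B_H
  set sgn : _ → ℝ := fun i => μ i * |μ i|⁻¹ with hsgndef
  have hBH : S * H * S = ψ sgn := by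
    rw [hSpsi, hHspec, ← _root_.map_mul, ← _root_.map_mul]
    congr 1; funext i
    simp only [Pi.mul_apply, hgdef, hsgndef]
    have hma : Real.sqrt |μ i| * Real.sqrt |μ i| = |μ i| := Real.mul_self_sqrt (abs_nonneg _)
    rw [mul_comm ((Real.sqrt |μ i|)⁻¹) (μ i), mul_assoc, ← mul_inv, hma]
  have hBHsym : (ψ sgn).IsHermitian := conjDiagHom_isHermitian hV1 hV2 sgn
  have hBH2 : (ψ sgn)ᴴ * (ψ sgn) = 1 := by
    rw [hBHsym, ← _root_.map_mul]
    have h0 : (sgn * sgn) = 1 := by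
      funext i
      simp only [Pi.mul_apply, hsgndef, Pi.one_apply]
      have : μ i * |μ i|⁻¹ * (μ i * |μ i|⁻¹) = (μ i * μ i) * (|μ i| * |μ i|)⁻¹ := by
        rw [mul_inv]; ring
      rw [this, abs_mul_abs_self, mul_inv_cancel₀]
      have h1 := hmusq i
      nlinarith [hα]
    rw [h0, _root_.map_one]
  have hBHnorm : ∀ x, vecNorm ((S * H * S) *ᵥ x) = vecNorm x := by
    intro x
    rw [hBH]
    exact vecNorm_mulVec_unitary hBH2 x
  -- diagonal part A - H
  have hD : A - H = Matrix.diagonal (Sum.elim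
      (fun p : Fin n × Fin m => if (p.1 : ℕ) = n - 1 then -(α/2) else 0)
      (fun p : Fin n × Fin m => if (p.1 : ℕ) = 0 then α/2 else 0)) := hD_lemma m n α L
  have hDnorm : ‖A - H‖ ≤ α/2 := by
    rw [hD]
    refine norm_diagonal_le _ _ (by positivity) fun i => ?_
    rcases i with p | p
    · simp only [Sum.elim_inl]
      split_ifs
      · rw [abs_neg, abs_of_nonneg (by positivity : (0:ℝ) ≤ α/2)]
      · rw [abs_zero]; positivity
    · simp only [Sum.elim_inr]
      split_ifs
      · rw [abs_of_nonneg (by positivity : (0:ℝ) ≤ α/2)]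
      · rw [abs_zero]; positivity
  -- split B
  set Bm := Bmat m n α L with hBmdef
  have hBSAS : Bm = S * A * S := by rw [hBmdef, Bmat]
  have hBsplit : Bm = S * H * S + S * (A - H) * S := by
    rw [hBSAS]; noncomm_ring
  have hEnorm : ‖S * (A - H) * S‖ ≤ 1/2 := by
    have h1 : ‖S * (A - H) * S‖ ≤ ‖S * (A - H)‖ * ‖S‖ := Matrix.l2_opNorm_mul _ _
    have h2 : ‖S * (A - H)‖ ≤ ‖S‖ * ‖A - H‖ := Matrix.l2_opNorm_mul _ _
    have hs0 : (0:ℝ) ≤ ‖S‖ := norm_nonneg _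
    have hd0 : (0:ℝ) ≤ ‖A - H‖ := norm_nonneg _
    have key : (Real.sqrt α)⁻¹ * (α/2) * (Real.sqrt α)⁻¹ = 1/2 := by
      have h3 : (Real.sqrt α)⁻¹ * (α/2) * (Real.sqrt α)⁻¹
          = α / (2 * (Real.sqrt α * Real.sqrt α)) := by ring
      rw [h3, Real.mul_self_sqrt hα.le]
      rw [div_eq_div_iff (by positivity) (by norm_num)]
      ring
    calc ‖S * (A - H) * S‖ ≤ ‖S * (A - H)‖ * ‖S‖ := h1
      _ ≤ (‖S‖ * ‖A - H‖) * ‖S‖ := mul_le_mul_of_nonneg_right h2 hs0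
      _ ≤ ((Real.sqrt α)⁻¹ * (α/2)) * (Real.sqrt α)⁻¹ := by
          have h4 : ‖S‖ * ‖A - H‖ ≤ (Real.sqrt α)⁻¹ * (α/2) :=
            mul_le_mul hSnorm hDnorm hd0 (by positivity)
          exact mul_le_mul h4 hSnorm hs0 (by positivity)
      _ = 1/2 := key
  have hEx : ∀ x, vecNorm ((S * (A - H) * S) *ᵥ x) ≤ (1/2) * vecNorm x := by
    intro x
    refine le_trans (vecNorm_mulVec_le _ _) ?_
    exact mul_le_mul_of_nonneg_right hEnorm (vecNorm_nonneg x)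
  have hBlow : ∀ x, (1/2) * vecNorm x ≤ vecNorm (Bm *ᵥ x) := by
    intro x
    have htri : vecNorm ((S * H * S) *ᵥ x)
        ≤ vecNorm (Bm *ᵥ x) + vecNorm ((S * (A - H) * S) *ᵥ x) := by
      have h0 : (S * H * S) *ᵥ x = Bm *ᵥ x - (S * (A - H) * S) *ᵥ x := by
        rw [hBsplit, Matrix.add_mulVec]; abel
      rw [h0]; exact vecNorm_sub_le _ _
    rw [hBHnorm x] at htri
    have := hEx x
    linarith
  have hBhigh : ∀ x, vecNorm (Bm *ᵥ x) ≤ (3/2) * vecNorm x := by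
    intro x
    have h0 : Bm *ᵥ x = (S * H * S) *ᵥ x + (S * (A - H) * S) *ᵥ x := by
      rw [hBsplit, Matrix.add_mulVec]
    rw [h0]
    refine le_trans (vecNorm_add_le _ _) ?_
    rw [hBHnorm x]
    have := hEx x
    linarith
  -- B hermitian
  have hSsym : Sᴴ = S := by
    rw [hSpsi]; exact conjDiagHom_isHermitian hV1 hV2 g
  have hBsym : Bm.IsHermitian := by
    rw [hBSAS]
    unfold Matrix.IsHermitian
    rw [Matrix.conjTranspose_mul, Matrix.conjTranspose_mul, hSsym, hAsym, Matrix.mul_assoc]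
  -- quadratic form facts
  have hdot : ∀ x : _ → ℝ, x ⬝ᵥ ((Bm * Bm) *ᵥ x) = (Bm *ᵥ x) ⬝ᵥ (Bm *ᵥ x) := by
    intro x
    rw [← Matrix.mulVec_mulVec, Matrix.dotProduct_mulVec x Bm, ← Matrix.mulVec_transpose,
      ← real_conjT, hBsym]
  have hBBsym : (Bm * Bm).IsHermitian := by
    unfold Matrix.IsHermitian
    rw [Matrix.conjTranspose_mul, hBsym]
  have h94 : (((9/4 : ℝ)) • 1 - Bm * Bm).PosSemidef := by
    refine Matrix.PosSemidef.of_dotProduct_mulVec_nonneg ?_ ?_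
    · unfold Matrix.IsHermitian
      rw [Matrix.conjTranspose_sub, Matrix.conjTranspose_smul, Matrix.conjTranspose_one,
        hBBsym, star_trivial]
    · intro x
      have hx := hBhigh x
      have h1 : (vecNorm (Bm *ᵥ x))^2 ≤ ((3/2) * vecNorm x)^2 :=
        pow_le_pow_left₀ (vecNorm_nonneg _) hx 2
      rw [mul_pow, vecNorm_sq, vecNorm_sq] at h1
      have hsx : star x = x := by simp
      rw [hsx, Matrix.sub_mulVec, Matrix.smul_mulVec, Matrix.one_mulVec,
        dotProduct_sub, dotProduct_smul, hdot x]
      simp only [smul_eq_mul]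
      nlinarith
  have h14 : (Bm * Bm - ((1/4 : ℝ)) • 1).PosSemidef := by
    refine Matrix.PosSemidef.of_dotProduct_mulVec_nonneg ?_ ?_
    · unfold Matrix.IsHermitian
      rw [Matrix.conjTranspose_sub, Matrix.conjTranspose_smul, Matrix.conjTranspose_one,
        hBBsym, star_trivial]
    · intro x
      have hx := hBlow x
      have h1 : ((1/2) * vecNorm x)^2 ≤ (vecNorm (Bm *ᵥ x))^2 :=
        pow_le_pow_left₀ (mul_nonneg (by norm_num) (vecNorm_nonneg x)) hx 2
      rw [mul_pow, vecNorm_sq, vecNorm_sq] at h1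
      have hsx : star x = x := by simp
      rw [hsx, Matrix.sub_mulVec, Matrix.smul_mulVec, Matrix.one_mulVec,
        dotProduct_sub, dotProduct_smul, hdot x]
      simp only [smul_eq_mul]
      nlinarith
  set M' := ((5/4 : ℝ)) • (1 : Matrix ((Fin n × Fin m) ⊕ (Fin n × Fin m)) ((Fin n × Fin m) ⊕ (Fin n × Fin m)) ℝ) - Bm * Bm with hM'def
  have hM'sym : M'.IsHermitian := by
    rw [hM'def]
    unfold Matrix.IsHermitian
    rw [Matrix.conjTranspose_sub, Matrix.conjTranspose_smul, Matrix.conjTranspose_one,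
      hBBsym, star_trivial]
  have hM'a : (M' - ((-1 : ℝ)) • 1).PosSemidef := by
    have h0 : M' - ((-1 : ℝ)) • 1 = ((9/4 : ℝ)) • 1 - Bm * Bm := by
      rw [hM'def]; module
    rw [h0]; exact h94
  have hM'b : (((1 : ℝ)) • 1 - M').PosSemidef := by
    have h0 : ((1 : ℝ)) • (1 : Matrix ((Fin n × Fin m) ⊕ (Fin n × Fin m)) ((Fin n × Fin m) ⊕ (Fin n × Fin m)) ℝ) - M' = Bm * Bm - ((1/4 : ℝ)) • 1 := by
      rw [hM'def]; module
    rw [h0]; exact h14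
  -- the polynomial
  set c := (Polynomial.Chebyshev.T ℝ (k : ℤ)).eval (5/4 : ℝ) with hcdef
  have hcpos : 0 < c := cheb_eval_54_pos k
  set q : Polynomial ℝ := (Polynomial.Chebyshev.T ℝ (k : ℤ)).comp
    (Polynomial.C (5/4 : ℝ) - Polynomial.X ^ 2) with hqdef
  set p : Polynomial ℝ := Polynomial.C c⁻¹ * q with hpdef
  have hp0 : Polynomial.eval 0 p = 1 := by
    rw [hpdef, Polynomial.eval_mul, Polynomial.eval_C, hqdef, Polynomial.eval_comp]
    norm_num
    rw [← hcdef]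
    exact inv_mul_cancel₀ hcpos.ne'
  have hpdeg : p.natDegree ≤ 2 * k := by
    rw [hpdef]
    refine le_trans (Polynomial.natDegree_C_mul_le _ _) ?_
    rw [hqdef]
    refine le_trans Polynomial.natDegree_comp_le ?_
    have h1 := cheb_natDegree_le k
    have h2 : (Polynomial.C (5/4 : ℝ) - Polynomial.X ^ 2).natDegree ≤ 2 := by
      refine le_trans (Polynomial.natDegree_sub_le _ _) ?_
      simp [Polynomial.natDegree_C, Polynomial.natDegree_X_pow]
    calc _ ≤ k * 2 := Nat.mul_le_mul h1 h2
      _ = 2 * k := by ring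
  have haev : Polynomial.aeval Bm p
      = c⁻¹ • Polynomial.aeval M' (Polynomial.Chebyshev.T ℝ (k : ℤ)) := by
    rw [hpdef, _root_.map_mul, Polynomial.aeval_C, hqdef, Polynomial.aeval_comp]
    have h0 : Polynomial.aeval Bm (Polynomial.C (5/4 : ℝ) - Polynomial.X ^ 2) = M' := by
      rw [_root_.map_sub, Polynomial.aeval_C, _root_.map_pow, Polynomial.aeval_X, hM'def,
        Algebra.algebraMap_eq_smul_one, pow_two]
    rw [h0, ← Algebra.smul_def]
  have hnormT : ‖Polynomial.aeval M' (Polynomial.Chebyshev.T ℝ (k : ℤ))‖ ≤ 1 :=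
    norm_aeval_le hM'sym zero_le_one hM'a hM'b _
      (fun x hx1 hx2 => cheb_abs_le k hx1 hx2)
  have hcinv : c⁻¹ ≤ 2 * (1/2 : ℝ)^k := by
    have h3 := cheb_eval_54_ge k
    have h4 : (0:ℝ) < (2:ℝ)^k / 2 := by positivity
    have h5 : c⁻¹ ≤ ((2:ℝ)^k / 2)⁻¹ := inv_anti₀ h4 h3
    refine le_trans h5 (le_of_eq ?_)
    rw [div_pow, one_pow]
    rw [inv_div]
    rw [div_eq_iff (by positivity)]
    field_simp
  have hnormp : ‖Polynomial.aeval Bm p‖ ≤ 2 * (1/2 : ℝ)^k := by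
    rw [haev, norm_smul]
    have h1 : ‖(c⁻¹ : ℝ)‖ = c⁻¹ := by
      rw [Real.norm_eq_abs, abs_of_pos (by positivity)]
    rw [h1]
    calc c⁻¹ * ‖Polynomial.aeval M' (Polynomial.Chebyshev.T ℝ (k : ℤ))‖
        ≤ c⁻¹ * 1 := mul_le_mul_of_nonneg_left hnormT (by positivity)
      _ = c⁻¹ := mul_one _
      _ ≤ 2 * (1/2 : ℝ)^k := hcinv
  constructor
  · exact ⟨p, hp0, hpdeg, by rw [← hBmdef] at *; exact hnormp⟩
  · intro r0
    have hcomm : S * (A * (absH m n α L)⁻¹) = Bm * S := by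
      rw [← hSS, hBSAS]
      simp only [Matrix.mul_assoc]
    have hkey : S * Polynomial.aeval (A * (absH m n α L)⁻¹) p
        = Polynomial.aeval Bm p * S := mul_aeval_comm hcomm p
    have hbdd : BddBelow {x : ℝ | ∃ p : Polynomial ℝ, Polynomial.eval 0 p = 1 ∧
        p.natDegree ≤ 2 * k ∧ x = vecNorm ((invSqrtAbsH m n α L *
          Polynomial.aeval (Amat m n α L * (absH m n α L)⁻¹) p) *ᵥ r0)} := by
      refine ⟨0, fun x hx => ?_⟩
      obtain ⟨p', _, _, hxe⟩ := hx
      rw [hxe]; exact vecNorm_nonneg _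
    have hmem : vecNorm ((S * Polynomial.aeval (A * (absH m n α L)⁻¹) p) *ᵥ r0)
        ∈ {x : ℝ | ∃ p : Polynomial ℝ, Polynomial.eval 0 p = 1 ∧
        p.natDegree ≤ 2 * k ∧ x = vecNorm ((invSqrtAbsH m n α L *
          Polynomial.aeval (Amat m n α L * (absH m n α L)⁻¹) p) *ᵥ r0)} :=
      ⟨p, hp0, hpdeg, rfl⟩
    refine le_trans (csInf_le hbdd hmem) ?_
    rw [hkey, ← Matrix.mulVec_mulVec]
    calc vecNorm (Polynomial.aeval Bm p *ᵥ (S *ᵥ r0))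
        ≤ ‖Polynomial.aeval Bm p‖ * vecNorm (S *ᵥ r0) := vecNorm_mulVec_le _ _
      _ ≤ 2 * (1/2 : ℝ)^k * vecNorm (S *ᵥ r0) :=
          mul_le_mul_of_nonneg_right hnormp (vecNorm_nonneg _)
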